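/- arXiv:1407.5555 — 4 statements merged into one kernel-verified Lean document; each statement's English description precedes it below -/
import Mathlib

section
/- The point p_0* = (r_0*, 0, …, 0) ∈ ℝ^{N+1} is always a stationary solution of the aggregated system S_0^c. If f̃_i(r_0*) ≠ m̃_i for every i = 1,…,N (i.e. r_0* ≠ r_i* for all i ≥ 1), then p_0* is hyperbolic. If moreover f̃_i(r_0*) < m̃_i for every i = 1,…,N (i.e. r_0* < r_i* for all i ≥ 1), then p_0* is the only nonnegative stationary solution of S_0^c and it is linearly asymptotically stable. -/
open Filter Topology

namespace Aggregated

/-- Right-hand side of the aggregated chemostat system `S₀ᶜ` on `ℝ^{N+1}`: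
coordinate `0` is the resource `r`, coordinate `i.succ` is species `i`. -/
noncomputable def rhs (N : ℕ) (Itld : ℝ) (mtld : Fin (N + 1) → ℝ)
    (ftld : Fin N → ℝ → ℝ) (p : Fin (N + 1) → ℝ) : Fin (N + 1) → ℝ :=
  fun k =>
    Fin.cases (motive := fun _ => ℝ)
      (Itld - mtld 0 * p 0 - ∑ i : Fin N, ftld i (p 0) * p i.succ)
      (fun i => (ftld i (p 0) - mtld i.succ) * p i.succ)
      k

/-- A solution of `S₀ᶜ` on `[0, ∞)` (values for `t < 0` are irrelevant). -/
def IsSolution (N : ℕ) (Itld : ℝ) (mtld : Fin (N + 1) → ℝ)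
    (ftld : Fin N → ℝ → ℝ) (p : ℝ → Fin (N + 1) → ℝ) : Prop :=
  ∀ t : ℝ, 0 ≤ t → HasDerivAt p (rhs N Itld mtld ftld (p t)) t

/-- Jacobian matrix of the right-hand side of `S₀ᶜ` at a point `p`. -/
noncomputable def jacMatrix (N : ℕ) (Itld : ℝ) (mtld : Fin (N + 1) → ℝ)
    (ftld : Fin N → ℝ → ℝ) (p : Fin (N + 1) → ℝ) :
    Matrix (Fin (N + 1)) (Fin (N + 1)) ℝ :=
  Matrix.of fun a b => fderiv ℝ (rhs N Itld mtld ftld) p (Pi.single b 1) a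

/-- Hyperbolicity: `0` is not a complex eigenvalue of the Jacobian. -/
noncomputable def IsHyperbolic (N : ℕ) (Itld : ℝ) (mtld : Fin (N + 1) → ℝ)
    (ftld : Fin N → ℝ → ℝ) (p : Fin (N + 1) → ℝ) : Prop :=
  (0 : ℂ) ∉ spectrum ℂ ((jacMatrix N Itld mtld ftld p).map (fun r : ℝ => (r : ℂ)))

/-- Linear asymptotic stability: all complex eigenvalues of the Jacobian have
negative real part. -/
noncomputable def IsLinStable (N : ℕ) (Itld : ℝ) (mtld : Fin (N + 1) → ℝ)
    (ftld : Fin N → ℝ → ℝ) (p : Fin (N + 1) → ℝ) : Prop :=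
  ∀ z ∈ spectrum ℂ ((jacMatrix N Itld mtld ftld p).map (fun r : ℝ => (r : ℂ))),
    z.re < 0

/-- Linear instability: some complex eigenvalue of the Jacobian has positive
real part. -/
noncomputable def IsLinUnstable (N : ℕ) (Itld : ℝ) (mtld : Fin (N + 1) → ℝ)
    (ftld : Fin N → ℝ → ℝ) (p : Fin (N + 1) → ℝ) : Prop :=
  ∃ z ∈ spectrum ℂ ((jacMatrix N Itld mtld ftld p).map (fun r : ℝ => (r : ℂ))),
    0 < z.re

/-- The species-free equilibrium `p₀* = (r₀*, 0, …, 0)` with `r₀* = Ĩ/m̃₀`. -/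
noncomputable def p0star (N : ℕ) (Itld : ℝ) (mtld : Fin (N + 1) → ℝ) :
    Fin (N + 1) → ℝ :=
  fun k => Fin.cases (motive := fun _ => ℝ) (Itld / mtld 0) (fun _ => 0) k

/-- The single-species equilibrium `pᵢ* = (rᵢ*, 0, …, 0, uᵢ*, 0, …, 0)` with
`uᵢ* = (m̃₀/m̃ᵢ)(r₀* − rᵢ*)`. -/
noncomputable def pistar (N : ℕ) (Itld : ℝ) (mtld : Fin (N + 1) → ℝ)
    (i : Fin N) (ri : ℝ) : Fin (N + 1) → ℝ :=
  fun k =>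
    if k = 0 then ri
    else if k = i.succ then mtld 0 / mtld i.succ * (Itld / mtld 0 - ri)
    else 0

end Aggregated

/-! At `p₀*` all species coordinates vanish, so the species rows of the Jacobian reduce to their
diagonal entries `f̃ᵢ(r₀*) - m̃ᵢ`; the Jacobian is upper triangular, with eigenvalues `-m̃₀` and
`f̃ᵢ(r₀*) - m̃ᵢ`. For uniqueness, a nonnegative equilibrium with some `uᵢ ≠ 0` has
`f̃ᵢ(r) = m̃ᵢ > f̃ᵢ(r₀*)`, hence `r > r₀*` by monotonicity, and then the resource equation
`Ĩ - m̃₀ r = ∑ f̃ᵢ(r) uᵢ ≥ 0` fails. -/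

open Polynomial in
theorem Matrix.IsUpperTriangular.mem_spectrum_iff {ι K : Type*} [Fintype ι] [DecidableEq ι]
    [LinearOrder ι] [Field K] {M : Matrix ι ι K} (hM : M.IsUpperTriangular) {z : K} :
    z ∈ spectrum K M ↔ ∃ i, M i i = z := by
  rw [Matrix.mem_spectrum_iff_isRoot_charpoly, M.charpoly_of_isUpperTriangular hM, IsRoot,
    eval_prod, Finset.prod_eq_zero_iff]
  simp [sub_eq_zero, eq_comm]

namespace Aggregated

variable {N : ℕ} {Itld : ℝ} {mtld : Fin (N + 1) → ℝ} {ftld : Fin N → ℝ → ℝ}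

local notation "coord" k:max =>
  ContinuousLinearMap.proj (R := ℝ) (φ := fun _ : Fin (N + 1) => ℝ) k

@[simp]
lemma rhs_zero (p : Fin (N + 1) → ℝ) :
    rhs N Itld mtld ftld p 0 = Itld - mtld 0 * p 0 - ∑ i, ftld i (p 0) * p i.succ :=
  rfl

@[simp]
lemma rhs_succ (p : Fin (N + 1) → ℝ) (i : Fin N) :
    rhs N Itld mtld ftld p i.succ = (ftld i (p 0) - mtld i.succ) * p i.succ :=
  rfl

@[simp]
lemma p0star_zero : p0star N Itld mtld 0 = Itld / mtld 0 :=
  rfl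

@[simp]
lemma p0star_succ (i : Fin N) : p0star N Itld mtld i.succ = 0 :=
  rfl

lemma rhs_p0star (hm : mtld 0 ≠ 0) : rhs N Itld mtld ftld (p0star N Itld mtld) = 0 := by
  ext k
  cases k using Fin.cases <;> simp [mul_div_cancel₀ _ hm]

lemma hasFDerivAt_rhs {p : Fin (N + 1) → ℝ} {f' : Fin N → ℝ}
    (hf : ∀ i, HasDerivAt (ftld i) (f' i) (p 0)) :
    HasFDerivAt (rhs N Itld mtld ftld)
      (ContinuousLinearMap.pi fun k => Fin.cases
        (-(mtld 0 • coord 0) - ∑ i, ((f' i * p i.succ) • coord 0 + ftld i (p 0) • coord i.succ))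
        (fun i => (f' i * p i.succ) • coord 0 + (ftld i (p 0) - mtld i.succ) • coord i.succ) k)
      p := by
  have hcoord (k : Fin (N + 1)) : HasFDerivAt (fun q : Fin (N + 1) → ℝ => q k) (coord k) p :=
    hasFDerivAt_apply k p
  have hfr (i : Fin N) :
      HasFDerivAt (fun q : Fin (N + 1) → ℝ => ftld i (q 0)) (f' i • coord 0) p :=
    (hf i).comp_hasFDerivAt p (hcoord 0)
  have hprod (i : Fin N) : HasFDerivAt (fun q : Fin (N + 1) → ℝ => ftld i (q 0) * q i.succ)
      ((f' i * p i.succ) • coord 0 + ftld i (p 0) • coord i.succ) p := by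
    refine ((hfr i).mul (hcoord i.succ)).congr_fderiv ?_
    ext v
    simp only [add_apply, smul_apply, ContinuousLinearMap.proj_apply, smul_eq_mul]
    ring
  refine hasFDerivAt_pi.2 fun k => ?_
  cases k using Fin.cases with
  | zero =>
    exact ((hasFDerivAt_const Itld p).sub ((hcoord 0).const_smul (mtld 0))).sub
      (HasFDerivAt.fun_sum fun i _ => hprod i) |>.congr_fderiv (by simp)
  | succ i =>
    refine (((hfr i).sub_const (mtld i.succ)).mul (hcoord i.succ)).congr_fderiv ?_
    ext v
    simp only [add_apply, smul_apply, ContinuousLinearMap.proj_apply, smul_eq_mul, Fin.cases_succ]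
    ring

lemma hasFDerivAt_rhs_p0star (hf : ∀ i, DifferentiableAt ℝ (ftld i) (Itld / mtld 0)) :
    HasFDerivAt (rhs N Itld mtld ftld)
      (ContinuousLinearMap.pi fun k => Fin.cases
        (-(mtld 0 • coord 0) - ∑ i, ftld i (Itld / mtld 0) • coord i.succ)
        (fun i => (ftld i (Itld / mtld 0) - mtld i.succ) • coord i.succ) k)
      (p0star N Itld mtld) :=
  (hasFDerivAt_rhs fun i => (hf i).hasDerivAt).congr_fderiv (by simp)

lemma mem_spectrum_jacMatrix_p0star_iff
    (hf : ∀ i, DifferentiableAt ℝ (ftld i) (Itld / mtld 0)) {z : ℂ} :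
    z ∈ spectrum ℂ ((jacMatrix N Itld mtld ftld (p0star N Itld mtld)).map (fun r : ℝ => (r : ℂ)))
      ↔ z = ↑(-mtld 0) ∨ ∃ i, z = ↑(ftld i (Itld / mtld 0) - mtld i.succ) := by
  have hfderiv := (hasFDerivAt_rhs_p0star hf).fderiv
  have htri : (jacMatrix N Itld mtld ftld (p0star N Itld mtld)).IsUpperTriangular := by
    intro a b hba
    cases a using Fin.cases with
    | zero => exact absurd hba (Fin.not_lt_zero b)
    | succ i => simp [jacMatrix, hfderiv, Pi.single_eq_of_ne (ne_of_gt hba : i.succ ≠ b)]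
  rw [Matrix.IsUpperTriangular.mem_spectrum_iff fun a b hba => by simp [htri hba],
    Fin.exists_fin_succ]
  simp [jacMatrix, hfderiv, Fin.succ_ne_zero, Pi.single_eq_of_ne, eq_comm]

lemma eq_p0star_of_rhs_eq_zero (hI : 0 ≤ Itld) (hm : 0 < mtld 0)
    (hf_mono : ∀ i, StrictMonoOn (ftld i) (Set.Ici 0))
    (hf_nonneg : ∀ i r, 0 ≤ r → 0 ≤ ftld i r)
    (hlt : ∀ i, ftld i (Itld / mtld 0) < mtld i.succ)
    {p : Fin (N + 1) → ℝ} (hp : ∀ k, 0 ≤ p k) (hrhs : rhs N Itld mtld ftld p = 0) :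
    p = p0star N Itld mtld := by
  have hbalance : Itld - mtld 0 * p 0 = ∑ i, ftld i (p 0) * p i.succ := by
    have := congrFun hrhs 0
    simp only [rhs_zero, Pi.zero_apply] at this
    linarith
  have hspecies (i : Fin N) : p i.succ = 0 := by
    by_contra hne
    have hfi : ftld i (p 0) = mtld i.succ := by
      simpa [sub_eq_zero, hne] using congrFun hrhs i.succ
    have hgt : Itld / mtld 0 < p 0 :=
      ((hf_mono i).lt_iff_lt (div_nonneg hI hm.le) (hp 0)).1 (hfi ▸ hlt i)
    rw [div_lt_iff₀ hm] at hgt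
    have hsum : 0 ≤ ∑ j, ftld j (p 0) * p j.succ :=
      Finset.sum_nonneg fun j _ => mul_nonneg (hf_nonneg j _ (hp 0)) (hp j.succ)
    linarith
  have hresource : p 0 = Itld / mtld 0 := by
    rw [eq_div_iff hm.ne']
    simp only [hspecies, mul_zero, Finset.sum_const_zero] at hbalance
    linarith
  ext k
  cases k using Fin.cases <;> simp [hresource, hspecies]

theorem statement7_general (N : ℕ)
    (Itld : ℝ) (hI : 0 < Itld)
    (mtld : Fin (N + 1) → ℝ) (hm : ∀ k, 0 < mtld k)
    (ftld : Fin N → ℝ → ℝ)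
    (hf_smooth : ∀ i, ContDiffOn ℝ 1 (ftld i) (Set.Ici 0))
    (hf_mono : ∀ i, StrictMonoOn (ftld i) (Set.Ici 0))
    (hf_nonneg : ∀ i r, 0 ≤ r → 0 ≤ ftld i r) :
    rhs N Itld mtld ftld (p0star N Itld mtld) = 0 ∧
    ((∀ i : Fin N, ftld i (Itld / mtld 0) ≠ mtld i.succ) →
      IsHyperbolic N Itld mtld ftld (p0star N Itld mtld)) ∧
    ((∀ i : Fin N, ftld i (Itld / mtld 0) < mtld i.succ) →
      (∀ p : Fin (N + 1) → ℝ, (∀ k, 0 ≤ p k) →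
        rhs N Itld mtld ftld p = 0 → p = p0star N Itld mtld) ∧
      IsLinStable N Itld mtld ftld (p0star N Itld mtld)) := by
  have hdiff (i : Fin N) : DifferentiableAt ℝ (ftld i) (Itld / mtld 0) :=
    ((hf_smooth i).contDiffAt (Ici_mem_nhds (div_pos hI (hm 0)))).differentiableAt one_ne_zero
  refine ⟨rhs_p0star (hm 0).ne', fun hne => ?_, fun hlt => ⟨fun p hp hrhs =>
    eq_p0star_of_rhs_eq_zero hI.le (hm 0) hf_mono hf_nonneg hlt hp hrhs, ?_⟩⟩
  · rw [IsHyperbolic, mem_spectrum_jacMatrix_p0star_iff hdiff]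
    rintro (h | ⟨i, h⟩) <;> rw [eq_comm, Complex.ofReal_eq_zero] at h
    · exact (hm 0).ne' (neg_eq_zero.1 h)
    · exact hne i (sub_eq_zero.1 h)
  · intro z hz
    rcases (mem_spectrum_jacMatrix_p0star_iff hdiff).1 hz with rfl | ⟨i, rfl⟩
    · simpa using hm 0
    · simpa using hlt i

/-- `p₀* = (r₀*, 0, …, 0)` is always a stationary solution of the
aggregated system `S₀ᶜ`; it is hyperbolic when `f̃ᵢ(r₀*) ≠ m̃ᵢ` for all `i`, and if
`f̃ᵢ(r₀*) < m̃ᵢ` for all `i` then it is the unique nonnegative stationary solution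
and it is linearly asymptotically stable. -/
theorem statement7 (N : ℕ) (hN : 1 ≤ N)
    (Itld : ℝ) (hI : 0 < Itld)
    (mtld : Fin (N + 1) → ℝ) (hm : ∀ k, 0 < mtld k)
    (ftld : Fin N → ℝ → ℝ)
    (hf_smooth : ∀ i, ContDiffOn ℝ 1 (ftld i) (Set.Ici 0))
    (hf_mono : ∀ i, StrictMonoOn (ftld i) (Set.Ici 0))
    (hf_zero : ∀ i, ftld i 0 = 0)
    (hf_nonneg : ∀ i r, 0 ≤ r → 0 ≤ ftld i r) :
    rhs N Itld mtld ftld (p0star N Itld mtld) = 0 ∧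
    ((∀ i : Fin N, ftld i (Itld / mtld 0) ≠ mtld i.succ) →
      IsHyperbolic N Itld mtld ftld (p0star N Itld mtld)) ∧
    ((∀ i : Fin N, ftld i (Itld / mtld 0) < mtld i.succ) →
      (∀ p : Fin (N + 1) → ℝ, (∀ k, 0 ≤ p k) →
        rhs N Itld mtld ftld p = 0 → p = p0star N Itld mtld) ∧
      IsLinStable N Itld mtld ftld (p0star N Itld mtld)) :=
  statement7_general N Itld hI mtld hm ftld hf_smooth hf_mono hf_nonneg

end Aggregated
end

section
/- Both the averaged map F₀ : ℝ^d × C(Ω, ℝ^d) → ℝ^d defined by F₀(X, Y) = (1/μ(Ω)) ∫_Ω f(x, X + Y(x)) dμ(x), and the Nemytskii map 𝒩 : ℝ^d × C(Ω, ℝ^d) → C(Ω, ℝ^d) defined by 𝒩(X, Y)(x) = f(x, X + Y(x)), are continuously Fréchet differentiable (C¹). -/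
/-!
For compact `Ω`, the superposition (Nemytskii) operator `Y ↦ (x ↦ g (x, Y x))` on `C(Ω, E)` is
continuous in the sup norm, because the sup-norm topology is the compact-open one. Applied to the
partial derivative `Dg`, this continuity gives both the continuity of the candidate derivative
`h ↦ (x ↦ Dg (x, Y x) (h x))` and, through the mean value inequality, a remainder estimate that is
uniform in `x`. Both maps of the theorem are this operator precomposed with the continuous linear
map `(X, Y) ↦ X + Y`, followed, for the averaged map, by integration and scaling.
-/

open MeasureTheory Topology

namespace ContinuousMap

variable {Ω E F : Type*} [TopologicalSpace Ω]

section Topological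

variable [TopologicalSpace E] [TopologicalSpace F]

def nemytskii (g : C(Ω × E, F)) (Y : C(Ω, E)) : C(Ω, F) :=
  g.comp ((ContinuousMap.id Ω).prodMk Y)

@[simp]
lemma nemytskii_apply (g : C(Ω × E, F)) (Y : C(Ω, E)) (x : Ω) :
    nemytskii g Y x = g (x, Y x) :=
  rfl

lemma continuous_nemytskii [LocallyCompactPair Ω E] (g : C(Ω × E, F)) :
    Continuous (nemytskii g) :=
  continuous_of_continuous_uncurry _ (g.continuous.comp (continuous_snd.prodMk continuous_eval))

end Topological

variable [CompactSpace Ω] [NormedAddCommGroup E] [NormedAddCommGroup F]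

/-- Proved through the continuity of `nemytskii g` at `Y` along the constant perturbations
`Y + const Ω v`. -/
lemma eventually_forall_dist_nemytskii_lt (g : C(Ω × E, F)) (Y : C(Ω, E)) {ε : ℝ}
    (hε : 0 < ε) : ∀ᶠ v in 𝓝 (0 : E), ∀ x, dist (g (x, Y x + v)) (g (x, Y x)) < ε := by
  have hcont : Continuous fun v : E => nemytskii g (Y + const Ω v) :=
    (continuous_nemytskii g).comp (continuous_const.add continuous_const')
  have hY : nemytskii g (Y + const Ω 0) = nemytskii g Y := by simp
  filter_upwards [hcont.continuousAt.eventually (Metric.ball_mem_nhds _ hε)] with v hv x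
  rw [hY] at hv
  exact (dist_apply_le_dist x).trans_lt hv

variable [NormedSpace ℝ E] [NormedSpace ℝ F]

noncomputable def applyCLM : C(Ω, E →L[ℝ] F) →L[ℝ] C(Ω, E) →L[ℝ] C(Ω, F) :=
  LinearMap.mkContinuous₂
    (LinearMap.mk₂ ℝ (fun (A : C(Ω, E →L[ℝ] F)) (h : C(Ω, E)) =>
        (⟨fun x => A x (h x), A.continuous.clm_apply h.continuous⟩ : C(Ω, F)))
      (fun _ _ _ => by ext; simp) (fun _ _ _ => by ext; simp)
      (fun _ _ _ => by ext; simp) (fun _ _ _ => by ext; simp))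
    1 fun A h => by
      refine (norm_le _ (by positivity)).2 fun x => ?_
      calc ‖A x (h x)‖ ≤ ‖A x‖ * ‖h x‖ := (A x).le_opNorm (h x)
        _ ≤ 1 * ‖A‖ * ‖h‖ := by
          rw [one_mul]
          gcongr <;> apply norm_coe_le_norm

@[simp]
lemma applyCLM_apply (A : C(Ω, E →L[ℝ] F)) (h : C(Ω, E)) (x : Ω) :
    applyCLM A h x = A x (h x) :=
  rfl

theorem hasFDerivAt_nemytskii {g : C(Ω × E, F)} {Dg : C(Ω × E, E →L[ℝ] F)}
    (hg : ∀ x w, HasFDerivAt (fun w => g (x, w)) (Dg (x, w)) w) (Y : C(Ω, E)) :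
    HasFDerivAt (nemytskii g) (applyCLM (nemytskii Dg Y)) Y := by
  rw [hasFDerivAt_iff_isLittleO_nhds_zero, Asymptotics.isLittleO_iff]
  intro c hc
  obtain ⟨δ, hδ, hDg⟩ :=
    Metric.eventually_nhds_iff_ball.1 (eventually_forall_dist_nemytskii_lt Dg Y hc)
  filter_upwards [Metric.ball_mem_nhds 0 hδ] with h hh
  refine (norm_le _ (by positivity)).2 fun x => ?_
  have hbound : ∀ w ∈ Metric.ball (Y x) δ, ‖Dg (x, w) - Dg (x, Y x)‖ ≤ c := fun w hw => by
    have hw' := hDg (w - Y x) (by rwa [mem_ball_zero_iff, ← dist_eq_norm]) x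
    rw [add_sub_cancel, dist_eq_norm] at hw'
    exact hw'.le
  have hx : Y x + h x ∈ Metric.ball (Y x) δ := by
    rw [Metric.mem_ball, dist_self_add_left]
    exact (norm_coe_le_norm h x).trans_lt (mem_ball_zero_iff.1 hh)
  have hmv := (convex_ball (Y x) δ).norm_image_sub_le_of_norm_hasFDerivWithin_le'
    (fun w _ => (hg x w).hasFDerivWithinAt) hbound (Metric.mem_ball_self hδ) hx
  rw [add_sub_cancel_left] at hmv
  simpa using hmv.trans (mul_le_mul_of_nonneg_left (norm_coe_le_norm h x) hc.le)

theorem contDiff_nemytskii {g : C(Ω × E, F)} {Dg : C(Ω × E, E →L[ℝ] F)}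
    (hg : ∀ x w, HasFDerivAt (fun w => g (x, w)) (Dg (x, w)) w) :
    ContDiff ℝ 1 (nemytskii g) :=
  contDiff_one_iff_hasFDerivAt.2
    ⟨_, applyCLM.continuous.comp (continuous_nemytskii Dg), hasFDerivAt_nemytskii hg⟩

section Integral

variable [MeasurableSpace Ω] [BorelSpace Ω] [SecondCountableTopologyEither Ω E] [CompleteSpace E]

noncomputable def integralCLM (μ : Measure Ω) [IsFiniteMeasure μ] : C(Ω, E) →L[ℝ] E :=
  L1.integralCLM ∘L toLp 1 μ ℝ

lemma integralCLM_apply (μ : Measure Ω) [IsFiniteMeasure μ] (Y : C(Ω, E)) :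
    integralCLM μ Y = ∫ x, Y x ∂μ := by
  rw [integralCLM, ContinuousLinearMap.comp_apply, ← L1.integral_def, L1.integral_eq_integral]
  exact integral_congr_ae (coeFn_toLp μ Y)

end Integral

end ContinuousMap

open ContinuousMap

theorem statement14_general (Ω : Type*) [MetricSpace Ω] [CompactSpace Ω]
    [MeasurableSpace Ω] [BorelSpace Ω]
    (μ : Measure Ω) [IsFiniteMeasure μ]
    (d : ℕ)
    (f : Ω → (Fin d → ℝ) → (Fin d → ℝ))
    (hf_cont : Continuous fun q : Ω × (Fin d → ℝ) => f q.1 q.2)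
    (Df : Ω → (Fin d → ℝ) → ((Fin d → ℝ) →L[ℝ] (Fin d → ℝ)))
    (hDf : ∀ (x : Ω) (w : Fin d → ℝ), HasFDerivAt (f x) (Df x w) w)
    (hDf_cont : Continuous fun q : Ω × (Fin d → ℝ) => Df q.1 q.2) :
    ContDiff ℝ 1 (fun p : (Fin d → ℝ) × C(Ω, Fin d → ℝ) =>
      (μ Set.univ).toReal⁻¹ • ∫ x, f x (p.1 + p.2 x) ∂μ) ∧
    (∀ Nem : (Fin d → ℝ) × C(Ω, Fin d → ℝ) → C(Ω, Fin d → ℝ),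
      (∀ (p : (Fin d → ℝ) × C(Ω, Fin d → ℝ)) (x : Ω), Nem p x = f x (p.1 + p.2 x)) →
      ContDiff ℝ 1 Nem) := by
  let g : C(Ω × (Fin d → ℝ), Fin d → ℝ) := ⟨_, hf_cont⟩
  let Dg : C(Ω × (Fin d → ℝ), (Fin d → ℝ) →L[ℝ] (Fin d → ℝ)) := ⟨_, hDf_cont⟩
  let shift : (Fin d → ℝ) × C(Ω, Fin d → ℝ) →L[ℝ] C(Ω, Fin d → ℝ) :=
    (ContinuousLinearMap.const ℝ Ω).coprod (.id ℝ _)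
  have hN : ContDiff ℝ 1 fun p => nemytskii g (shift p) :=
    (contDiff_nemytskii (Dg := Dg) hDf).comp shift.contDiff
  have hN_apply : ∀ p x, nemytskii g (shift p) x = f x (p.1 + p.2 x) := fun _ _ => rfl
  refine ⟨?_, fun Nem hNem => ?_⟩
  · simpa only [Function.comp_def, integralCLM_apply, hN_apply] using
      ((integralCLM μ).contDiff.comp hN).const_smul (μ Set.univ).toReal⁻¹
  · rwa [show Nem = fun p => nemytskii g (shift p) from funext fun p => ext (hNem p)]

/-- Let `Ω` be a compact metric space with a finite Borel
measure `μ`, `μ(Ω) > 0`, and let `f : Ω × ℝ^d → ℝ^d` be continuous, differentiable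
in its second variable, with derivative `D_w f` continuous and locally Lipschitz
in the second variable uniformly in `x`. Then both the averaged map
`F₀(X, Y) = (1/μ(Ω)) ∫_Ω f(x, X + Y(x)) dμ(x)` and the Nemytskii map
`𝒩(X, Y)(x) = f(x, X + Y(x))`, on `ℝ^d × C(Ω, ℝ^d)`, are continuously Fréchet
differentiable. -/
theorem statement14 (Ω : Type*) [MetricSpace Ω] [CompactSpace Ω]
    [MeasurableSpace Ω] [BorelSpace Ω]
    (μ : Measure Ω) [IsFiniteMeasure μ] (hμ : 0 < μ Set.univ)
    (d : ℕ) (hd : 1 ≤ d)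
    (f : Ω → (Fin d → ℝ) → (Fin d → ℝ))
    (hf_cont : Continuous fun q : Ω × (Fin d → ℝ) => f q.1 q.2)
    (Df : Ω → (Fin d → ℝ) → ((Fin d → ℝ) →L[ℝ] (Fin d → ℝ)))
    (hDf : ∀ (x : Ω) (w : Fin d → ℝ), HasFDerivAt (f x) (Df x w) w)
    (hDf_cont : Continuous fun q : Ω × (Fin d → ℝ) => Df q.1 q.2)
    (hDf_lip : ∀ r : ℝ, 0 < r → ∃ L : ℝ, 0 ≤ L ∧ ∀ (x : Ω) (w w' : Fin d → ℝ),
      ‖w‖ ≤ r → ‖w'‖ ≤ r → ‖Df x w - Df x w'‖ ≤ L * ‖w - w'‖) :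
    ContDiff ℝ 1 (fun p : (Fin d → ℝ) × C(Ω, Fin d → ℝ) =>
      (μ Set.univ).toReal⁻¹ • ∫ x, f x (p.1 + p.2 x) ∂μ) ∧
    (∀ Nem : (Fin d → ℝ) × C(Ω, Fin d → ℝ) → C(Ω, Fin d → ℝ),
      (∀ (p : (Fin d → ℝ) × C(Ω, Fin d → ℝ)) (x : Ω), Nem p x = f x (p.1 + p.2 x)) →
      ContDiff ℝ 1 Nem) :=
  statement14_general Ω μ d f hf_cont Df hDf hDf_cont
end

section
/- Let C₁, m₁ and C₂, m₂ : Fin P → ℝ be positive functions (two species with linear consumptions), with R_i* = m_i/C_i and r_i* = E(m_i)/E(C_i) for i = 1, 2. Then r_2* < r_1* if and only if cov(C₂/E(C₂), R_2*) − cov(C₁/E(C₁), R_1*) < E(R_1*) − E(R_2*). -/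
/-!
Since `C · (m / C) = m`, the covariance of the normalized consumption `C / E(C)` with the local
break-even value `R* = m / C` is `r* − E(R*)`. The covariance criterion is therefore just the
inequality `r₂* < r₁*` with `E(R₁*)` and `E(R₂*)` moved across.
-/

namespace BestCompetitor

/-- Spatial mean of a function on `Fin P`. -/
noncomputable def mean (P : ℕ) (g : Fin P → ℝ) : ℝ := (∑ j, g j) / P

/-- Covariance of two functions on `Fin P`. -/
noncomputable def cov (P : ℕ) (g h : Fin P → ℝ) : ℝ :=
  mean P (fun j => g j * h j) - mean P g * mean P h

lemma mean_pos {P : ℕ} (hP : 0 < P) {g : Fin P → ℝ} (hg : ∀ j, 0 < g j) : 0 < mean P g :=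
  have : Nonempty (Fin P) := ⟨⟨0, hP⟩⟩
  div_pos (Finset.sum_pos (fun j _ => hg j) Finset.univ_nonempty) (Nat.cast_pos.mpr hP)

lemma mean_div_const (P : ℕ) (g : Fin P → ℝ) (c : ℝ) :
    mean P (fun j => g j / c) = mean P g / c := by
  simp only [mean, ← Finset.sum_div, div_right_comm]

lemma cov_div_const (P : ℕ) (g h : Fin P → ℝ) (c : ℝ) :
    cov P (fun j => g j / c) h = cov P g h / c := by
  have hgh : (fun j => g j / c * h j) = fun j => g j * h j / c := by
    funext j
    exact div_mul_eq_mul_div (g j) c (h j)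
  rw [cov, cov, hgh, mean_div_const, mean_div_const, div_mul_eq_mul_div, sub_div]

lemma cov_self_div {P : ℕ} {C : Fin P → ℝ} (hC : ∀ j, C j ≠ 0) (m : Fin P → ℝ) :
    cov P C (fun j => m j / C j) = mean P m - mean P C * mean P (fun j => m j / C j) := by
  have hCm : (fun j => C j * (m j / C j)) = m := funext fun j => mul_div_cancel₀ (m j) (hC j)
  rw [cov, hCm]

lemma cov_normalized_breakEven {P : ℕ} {C : Fin P → ℝ} (hC : ∀ j, C j ≠ 0)
    (hE : mean P C ≠ 0) (m : Fin P → ℝ) :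
    cov P (fun j => C j / mean P C) (fun j => m j / C j)
      = mean P m / mean P C - mean P (fun j => m j / C j) := by
  rw [cov_div_const, cov_self_div hC, sub_div, mul_div_cancel_left₀ _ hE]

theorem statement17_general (P : ℕ) (hP : 1 ≤ P)
    (C₁ m₁ C₂ m₂ : Fin P → ℝ)
    (hC₁ : ∀ j, 0 < C₁ j)
    (hC₂ : ∀ j, 0 < C₂ j) :
    mean P m₂ / mean P C₂ < mean P m₁ / mean P C₁ ↔
      cov P (fun j => C₂ j / mean P C₂) (fun j => m₂ j / C₂ j)
          - cov P (fun j => C₁ j / mean P C₁) (fun j => m₁ j / C₁ j)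
        < mean P (fun j => m₁ j / C₁ j) - mean P (fun j => m₂ j / C₂ j) := by
  rw [cov_normalized_breakEven (fun j => (hC₁ j).ne') (mean_pos hP hC₁).ne',
    cov_normalized_breakEven (fun j => (hC₂ j).ne') (mean_pos hP hC₂).ne']
  constructor <;> intro h <;> linarith

/-- **competitive covariance in heterogeneous environment.** For
two species with linear consumptions `Cᵢ` and mortalities `mᵢ`, with
`Rᵢ* = mᵢ/Cᵢ` and `rᵢ* = E(mᵢ)/E(Cᵢ)`, one has `r₂* < r₁*` if and only if
`cov(C₂/E(C₂), R₂*) − cov(C₁/E(C₁), R₁*) < E(R₁*) − E(R₂*)`. -/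
theorem statement17 (P : ℕ) (hP : 1 ≤ P)
    (C₁ m₁ C₂ m₂ : Fin P → ℝ)
    (hC₁ : ∀ j, 0 < C₁ j) (hm₁ : ∀ j, 0 < m₁ j)
    (hC₂ : ∀ j, 0 < C₂ j) (hm₂ : ∀ j, 0 < m₂ j) :
    mean P m₂ / mean P C₂ < mean P m₁ / mean P C₁ ↔
      cov P (fun j => C₂ j / mean P C₂) (fun j => m₂ j / C₂ j)
          - cov P (fun j => C₁ j / mean P C₁) (fun j => m₁ j / C₁ j)
        < mean P (fun j => m₁ j / C₁ j) - mean P (fun j => m₂ j / C₂ j) :=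
  statement17_general P hP C₁ m₁ C₂ m₂ hC₁ hC₂

end BestCompetitor
end

section
/- Let P ≥ 2 and let R_1*, R_2* : Fin P → ℝ be positive functions such that min_{j} R_2*(j) < max_{j} R_1*(j). Then there exist positive functions C₁, C₂ : Fin P → ℝ such that E(C₂·R_2*)/E(C₂) < E(C₁·R_1*)/E(C₁), i.e. r_2* < r_1* for the corresponding averaged break-even values. (This is the corrected form of the paper's Proposition 5.2: as printed there, the hypotheses 'R_1*(j) < R_2*(j) for all j' and 'max_j R_2*(j) < min_j R_1*(j)' are contradictory; the intended content is that a species that is the weaker local competitor at every site, i.e. R_1*(j) < R_2*(j) for all j, can nevertheless be the better competitor in average for suitable consumption weights, which follows from this statement.) -/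
/-!
Putting a large weight `N` on a single site `j₀` drives the averaged break-even value
`E(C·R*)/E(C)` to the local value `R*(j₀)` as `N → ∞`. Since `min R₂* < max R₁*` there are
sites with `R₂*(j₂) < R₁*(j₁)`, and concentrating the consumption of species `i` on `jᵢ`
gives `r₂* < r₁*` for `N` large.
-/

namespace BestCompetitor

open Filter Topology

section WeightedAverage

variable {ι : Type*} [DecidableEq ι]

def spikeWeight (j₀ : ι) (N : ℝ) (j : ι) : ℝ := 1 + if j = j₀ then N else 0

lemma spikeWeight_pos (j₀ : ι) {N : ℝ} (hN : 0 ≤ N) (j : ι) : 0 < spikeWeight j₀ N j := by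
  unfold spikeWeight
  split_ifs <;> positivity

variable [Fintype ι]

noncomputable def weightedAvg (C R : ι → ℝ) : ℝ := (∑ j, C j * R j) / ∑ j, C j

lemma weightedAvg_spikeWeight (R : ι → ℝ) (j₀ : ι) {N : ℝ} (hN : 0 < N) :
    weightedAvg (spikeWeight j₀ N) R
      = R j₀ + (∑ j, R j - Fintype.card ι * R j₀) / (N + Fintype.card ι) := by
  have hsum : N + Fintype.card ι ≠ 0 := by positivity
  simp only [weightedAvg, spikeWeight, add_mul, one_mul, ite_mul, zero_mul,
    Finset.sum_add_distrib, Finset.sum_ite_eq', Finset.mem_univ, if_true, Finset.sum_const,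
    Finset.card_univ, nsmul_eq_mul, mul_one]
  field_simp
  ring

lemma tendsto_weightedAvg_spikeWeight (R : ι → ℝ) (j₀ : ι) :
    Tendsto (fun N => weightedAvg (spikeWeight j₀ N) R) atTop (𝓝 (R j₀)) := by
  have hdecay : Tendsto (fun N : ℝ => (∑ j, R j - Fintype.card ι * R j₀) / (N + Fintype.card ι))
      atTop (𝓝 0) :=
    tendsto_const_nhds.div_atTop (tendsto_atTop_add_const_right _ _ tendsto_id)
  have hlim := hdecay.const_add (R j₀)
  rw [add_zero] at hlim
  refine hlim.congr' ?_
  filter_upwards [eventually_gt_atTop 0] with N hN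
  exact (weightedAvg_spikeWeight R j₀ hN).symm

end WeightedAverage

lemma mean_mul_div_mean {P : ℕ} (C R : Fin P → ℝ) :
    mean P (fun j => C j * R j) / mean P C = weightedAvg C R := by
  rcases Nat.eq_zero_or_pos P with rfl | hP
  · simp [mean, weightedAvg]
  · exact div_div_div_cancel_right₀ (by positivity) _ _

theorem statement18_general (P : ℕ) (hP : 2 ≤ P)
    (R₁ R₂ : Fin P → ℝ)
    (hlt : (⨅ j, R₂ j) < ⨆ j, R₁ j) :
    ∃ C₁ C₂ : Fin P → ℝ, (∀ j, 0 < C₁ j) ∧ (∀ j, 0 < C₂ j) ∧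
      mean P (fun j => C₂ j * R₂ j) / mean P C₂
        < mean P (fun j => C₁ j * R₁ j) / mean P C₁ := by
  have : Nonempty (Fin P) := ⟨⟨0, by omega⟩⟩
  obtain ⟨j₂, hj₂⟩ := exists_lt_of_ciInf_lt hlt
  obtain ⟨j₁, hj₁⟩ := exists_lt_of_lt_ciSup hj₂
  obtain ⟨N, hN, havg⟩ := ((eventually_ge_atTop 0).and
    ((tendsto_weightedAvg_spikeWeight R₂ j₂).eventually_lt
      (tendsto_weightedAvg_spikeWeight R₁ j₁) hj₁)).exists
  refine ⟨spikeWeight j₁ N, spikeWeight j₂ N, spikeWeight_pos j₁ hN, spikeWeight_pos j₂ hN, ?_⟩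
  rwa [mean_mul_div_mean, mean_mul_div_mean]

/-- **corrected Proposition 5.2.** Let `P ≥ 2` and let
`R₁*, R₂* : Fin P → ℝ` be positive with `min_j R₂*(j) < max_j R₁*(j)`. Then there
are positive consumption weights `C₁, C₂` such that the averaged break-even
values satisfy `r₂* = E(C₂·R₂*)/E(C₂) < E(C₁·R₁*)/E(C₁) = r₁*`. -/
theorem statement18 (P : ℕ) (hP : 2 ≤ P)
    (R₁ R₂ : Fin P → ℝ) (hR₁ : ∀ j, 0 < R₁ j) (hR₂ : ∀ j, 0 < R₂ j)
    (hlt : (⨅ j, R₂ j) < ⨆ j, R₁ j) :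
    ∃ C₁ C₂ : Fin P → ℝ, (∀ j, 0 < C₁ j) ∧ (∀ j, 0 < C₂ j) ∧
      mean P (fun j => C₂ j * R₂ j) / mean P C₂
        < mean P (fun j => C₁ j * R₁ j) / mean P C₁ :=
  statement18_general P hP R₁ R₂ hlt

end BestCompetitor
end
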